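/- Define q_κ^x(t) = (√κ/(2π)^{1/4}) · exp(−κ²(t−x)²/4) and (∂₀^{-1}q_κ^x)(t) = (1/2)∫_{−∞}^t q_κ^x(τ)dτ − (1/2)∫_t^∞ q_κ^x(τ)dτ. Then for fixed x ≠ y, the quantity ⟨q_κ^x, (κ/√(2π))·∂₀^{-1}q_κ^y⟩ := ∫_ℝ q_κ^x(t) · (κ/√(2π)) · (∂₀^{-1}q_κ^y)(t) dt converges to sgn(x − y) as κ → ∞. -/

import Mathlib

open MeasureTheory Real Filter

/-- The 1-dimensional Gaussian factor `q_κ^x`. -/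
noncomputable def qGauss (κ x t : ℝ) : ℝ :=
  (Real.sqrt κ / (2 * Real.pi) ^ ((1 : ℝ) / 4)) * Real.exp (-κ ^ 2 * (t - x) ^ 2 / 4)

/-- The half-space primitive `∂₀⁻¹ q_κ^x`. -/
noncomputable def qGaussPrim (κ x t : ℝ) : ℝ :=
  (1 / 2) * (∫ τ in Set.Iic t, qGauss κ x τ) - (1 / 2) * (∫ τ in Set.Ici t, qGauss κ x τ)

/- ### Auxiliary material -/

lemma integrable_g1 : Integrable (fun s : ℝ => Real.exp (-s ^ 2)) := by
  simpa using integrable_exp_neg_mul_sq (b := (1 : ℝ)) one_pos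

lemma integral_g1 : ∫ s : ℝ, Real.exp (-s ^ 2) = Real.sqrt π := by
  simpa using integral_gaussian 1

/-- `gphi u = ∫_{-∞}^u e^{-s²} ds`. -/
noncomputable def gphi (u : ℝ) : ℝ := ∫ s in Set.Iic u, Real.exp (-s ^ 2)

lemma gphi_nonneg (u : ℝ) : 0 ≤ gphi u :=
  setIntegral_nonneg measurableSet_Iic fun s _ => (Real.exp_pos _).le

lemma gphi_le (u : ℝ) : gphi u ≤ Real.sqrt π := by
  rw [← integral_g1]
  exact setIntegral_le_integral integrable_g1
    (Eventually.of_forall fun s => (Real.exp_pos _).le)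

lemma gphi_mono : Monotone gphi := fun a b hab =>
  setIntegral_mono_set integrable_g1.integrableOn
    (Eventually.of_forall fun s => (Real.exp_pos _).le)
    (HasSubset.Subset.eventuallyLE (Set.Iic_subset_Iic.mpr hab))

lemma gphi_meas : Measurable gphi := gphi_mono.measurable

lemma gphi_tendsto_atTop : Tendsto gphi atTop (nhds (Real.sqrt π)) := by
  rw [← integral_g1]
  exact (aecover_Iic tendsto_id).integral_tendsto_of_countably_generated integrable_g1

lemma gphi_tendsto_atBot : Tendsto gphi atBot (nhds 0) := by
  have h : ∀ u : ℝ, gphi u = Real.sqrt π - ∫ s in Set.Ioi u, Real.exp (-s ^ 2) := by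
    intro u
    have := intervalIntegral.integral_Iic_add_Ioi (b := u) (μ := volume)
      (f := fun s : ℝ => Real.exp (-s ^ 2))
      integrable_g1.integrableOn integrable_g1.integrableOn
    rw [integral_g1] at this
    unfold gphi; linarith
  have h2 : Tendsto (fun u : ℝ => ∫ s in Set.Ioi u, Real.exp (-s ^ 2)) atBot
      (nhds (Real.sqrt π)) := by
    rw [← integral_g1]
    exact (aecover_Ioi (a := fun u : ℝ => u) tendsto_id).integral_tendsto_of_countably_generated
      integrable_g1
  have h3 := tendsto_const_nhds (x := Real.sqrt π) (f := atBot (α := ℝ)) |>.sub h2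
  rw [sub_self] at h3
  exact h3.congr fun u => (h u).symm

lemma integrable_comp_add_right' {g : ℝ → ℝ} (hg : Integrable g) (c : ℝ) :
    Integrable (fun x => g (x + c)) := by
  have h1 : MeasurePreserving (fun x : ℝ => x + c) volume volume :=
    measurePreserving_add_right volume c
  exact (h1.integrable_comp_emb (MeasurableEquiv.addRight c).measurableEmbedding).2 hg

/-- Substitution `s = b τ + c` in an integral over `ℝ`. -/
lemma integral_comp_affine (g : ℝ → ℝ) {b : ℝ} (hb : 0 < b) (c : ℝ) :
    ∫ τ : ℝ, g (b * τ + c) = b⁻¹ * ∫ s : ℝ, g s := by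
  have h1 : ∫ τ : ℝ, g (b * τ + c) = ∫ τ : ℝ, (fun y => g (y + c)) (b * τ) := rfl
  rw [h1, Measure.integral_comp_mul_left (fun y => g (y + c)) b,
    integral_add_right_eq_self, abs_of_pos (inv_pos.mpr hb), smul_eq_mul]

/-- Substitution `s = b τ + c` in an integral over `Iic`. -/
lemma setIntegral_Iic_comp_affine (g : ℝ → ℝ) {b : ℝ} (hb : 0 < b) (c a : ℝ) :
    ∫ τ in Set.Iic a, g (b * τ + c) = b⁻¹ * ∫ s in Set.Iic (b * a + c), g s := by
  rw [← integral_indicator measurableSet_Iic, ← integral_indicator measurableSet_Iic]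
  have key : (fun τ => (Set.Iic a).indicator (fun τ => g (b * τ + c)) τ) =
      fun τ => (Set.Iic (b * a + c)).indicator g (b * τ + c) := by
    funext τ
    simp only [Set.indicator_apply, Set.mem_Iic]
    by_cases hτ : τ ≤ a
    · rw [if_pos hτ, if_pos (by nlinarith)]
    · rw [if_neg hτ, if_neg (by intro h; exact hτ (by nlinarith))]
  rw [key, integral_comp_affine _ hb c]

lemma qGauss_eq (κ x t : ℝ) :
    qGauss κ x t = (Real.sqrt κ / (2 * Real.pi) ^ ((1 : ℝ) / 4)) *
      Real.exp (-(κ / 2 * t + -(κ / 2) * x) ^ 2) := by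
  unfold qGauss
  congr 2
  ring

lemma integral_Iic_qGauss {κ : ℝ} (hκ : 0 < κ) (y t : ℝ) :
    ∫ τ in Set.Iic t, qGauss κ y τ =
      (Real.sqrt κ / (2 * Real.pi) ^ ((1 : ℝ) / 4)) * (2 / κ) *
        gphi (κ / 2 * t + -(κ / 2) * y) := by
  simp only [qGauss_eq]
  rw [integral_const_mul,
    setIntegral_Iic_comp_affine (fun s => Real.exp (-s ^ 2)) (by linarith : (0:ℝ) < κ / 2)
      (-(κ / 2) * y) t]
  unfold gphi
  field_simp

lemma integral_qGauss {κ : ℝ} (hκ : 0 < κ) (y : ℝ) :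
    ∫ τ : ℝ, qGauss κ y τ =
      (Real.sqrt κ / (2 * Real.pi) ^ ((1 : ℝ) / 4)) * (2 / κ) * Real.sqrt π := by
  simp only [qGauss_eq]
  rw [integral_const_mul,
    integral_comp_affine (fun s => Real.exp (-s ^ 2)) (by linarith : (0:ℝ) < κ / 2)
      (-(κ / 2) * y), integral_g1]
  field_simp

lemma integrable_qGauss {κ : ℝ} (hκ : 0 < κ) (y : ℝ) :
    Integrable (fun τ => qGauss κ y τ) := by
  simp only [qGauss_eq]
  apply Integrable.const_mul
  have h0 : Integrable (fun s : ℝ => Real.exp (-(s + -(κ / 2) * y) ^ 2)) :=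
    integrable_comp_add_right' integrable_g1 (-(κ / 2) * y)
  have := (integrable_comp_mul_left_iff
    (fun s : ℝ => Real.exp (-(s + -(κ / 2) * y) ^ 2)) (by positivity : (κ/2 : ℝ) ≠ 0)).2 h0
  exact this

lemma qGaussPrim_eq {κ : ℝ} (hκ : 0 < κ) (y t : ℝ) :
    qGaussPrim κ y t = (Real.sqrt κ / (2 * Real.pi) ^ ((1 : ℝ) / 4)) / κ *
      (2 * gphi (κ / 2 * t + -(κ / 2) * y) - Real.sqrt π) := by
  have hIci : ∫ τ in Set.Ici t, qGauss κ y τ =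
      (∫ τ : ℝ, qGauss κ y τ) - ∫ τ in Set.Iic t, qGauss κ y τ := by
    have := intervalIntegral.integral_Iio_add_Ici (b := t) (μ := volume)
      (f := fun τ => qGauss κ y τ)
      (integrable_qGauss hκ y).integrableOn (integrable_qGauss hκ y).integrableOn
    rw [← integral_Iic_eq_integral_Iio] at this
    linarith
  unfold qGaussPrim
  rw [hIci, integral_Iic_qGauss hκ y t, integral_qGauss hκ y]
  field_simp
  ring

/-- The auxiliary function `H a = ∫ e^{-s²} (2 φ(s+a) - √π) ds`. -/
noncomputable def Hfun (a : ℝ) : ℝ :=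
  ∫ s : ℝ, Real.exp (-s ^ 2) * (2 * gphi (s + a) - Real.sqrt π)

lemma Hfun_integrand_meas (a : ℝ) :
    AEStronglyMeasurable
      (fun s : ℝ => Real.exp (-s ^ 2) * (2 * gphi (s + a) - Real.sqrt π)) volume := by
  apply Measurable.aestronglyMeasurable
  have h1 : Measurable fun s : ℝ => gphi (s + a) :=
    gphi_meas.comp (measurable_id.add_const a)
  exact (Real.measurable_exp.comp ((measurable_id.pow_const 2).neg)).mul
    ((h1.const_mul 2).sub_const _)

lemma Hfun_integrand_bound (a s : ℝ) :
    |Real.exp (-s ^ 2) * (2 * gphi (s + a) - Real.sqrt π)| ≤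
      Real.sqrt π * Real.exp (-s ^ 2) := by
  have h1 : |2 * gphi (s + a) - Real.sqrt π| ≤ Real.sqrt π :=
    abs_le.mpr ⟨by nlinarith [gphi_nonneg (s + a)], by nlinarith [gphi_le (s + a)]⟩
  calc |Real.exp (-s ^ 2) * (2 * gphi (s + a) - Real.sqrt π)|
      = Real.exp (-s ^ 2) * |2 * gphi (s + a) - Real.sqrt π| := by
        rw [abs_mul, abs_of_pos (Real.exp_pos _)]
    _ ≤ Real.exp (-s ^ 2) * Real.sqrt π :=
        mul_le_mul_of_nonneg_left h1 (Real.exp_pos _).le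
    _ = Real.sqrt π * Real.exp (-s ^ 2) := mul_comm _ _

lemma Hfun_tendsto_atTop : Tendsto Hfun atTop (nhds π) := by
  have key := tendsto_integral_filter_of_dominated_convergence (μ := volume)
    (l := atTop (α := ℝ))
    (F := fun (a : ℝ) (s : ℝ) => Real.exp (-s ^ 2) * (2 * gphi (s + a) - Real.sqrt π))
    (f := fun s : ℝ => Real.exp (-s ^ 2) * Real.sqrt π)
    (bound := fun s : ℝ => Real.sqrt π * Real.exp (-s ^ 2))
    (Eventually.of_forall Hfun_integrand_meas)
    (Eventually.of_forall fun a => ae_of_all _ fun s => Hfun_integrand_bound a s)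
    (integrable_g1.const_mul _)
    (ae_of_all _ (fun s => by
      have hg : Tendsto (fun a : ℝ => gphi (s + a)) atTop (nhds (Real.sqrt π)) :=
        gphi_tendsto_atTop.comp (tendsto_atTop_add_const_left atTop s tendsto_id)
      have h2 : (2 : ℝ) * Real.sqrt π - Real.sqrt π = Real.sqrt π := by ring
      have := tendsto_const_nhds (x := Real.exp (-s ^ 2)) (f := atTop (α := ℝ)) |>.mul
        ((hg.const_mul 2).sub (tendsto_const_nhds (x := Real.sqrt π) (f := atTop (α := ℝ))))
      rwa [h2] at this))
  have hval : ∫ s : ℝ, Real.exp (-s ^ 2) * Real.sqrt π = π := by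
    rw [integral_mul_const, integral_g1, Real.mul_self_sqrt Real.pi_pos.le]
  rw [hval] at key
  exact key

lemma Hfun_tendsto_atBot : Tendsto Hfun atBot (nhds (-π)) := by
  have key := tendsto_integral_filter_of_dominated_convergence (μ := volume)
    (l := atBot (α := ℝ))
    (F := fun (a : ℝ) (s : ℝ) => Real.exp (-s ^ 2) * (2 * gphi (s + a) - Real.sqrt π))
    (f := fun s : ℝ => Real.exp (-s ^ 2) * (-Real.sqrt π))
    (bound := fun s : ℝ => Real.sqrt π * Real.exp (-s ^ 2))
    (Eventually.of_forall Hfun_integrand_meas)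
    (Eventually.of_forall fun a => ae_of_all _ fun s => Hfun_integrand_bound a s)
    (integrable_g1.const_mul _)
    (ae_of_all _ (fun s => by
      have hg : Tendsto (fun a : ℝ => gphi (s + a)) atBot (nhds 0) :=
        gphi_tendsto_atBot.comp (tendsto_atBot_add_const_left atBot s tendsto_id)
      have h2 : (2 : ℝ) * 0 - Real.sqrt π = -Real.sqrt π := by ring
      have := tendsto_const_nhds (x := Real.exp (-s ^ 2)) (f := atBot (α := ℝ)) |>.mul
        ((hg.const_mul 2).sub (tendsto_const_nhds (x := Real.sqrt π) (f := atBot (α := ℝ))))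
      rwa [h2] at this))
  have hval : ∫ s : ℝ, Real.exp (-s ^ 2) * (-Real.sqrt π) = -π := by
    rw [integral_mul_const, integral_g1]
    rw [mul_neg, Real.mul_self_sqrt Real.pi_pos.le]
  rw [hval] at key
  exact key

lemma quarter_pow_sq : ((2 * π) ^ ((1 : ℝ) / 4)) ^ 2 = Real.sqrt (2 * π) := by
  rw [← Real.rpow_natCast ((2 * π) ^ ((1 : ℝ) / 4)) 2,
    ← Real.rpow_mul (by positivity : (0:ℝ) ≤ 2 * π), Real.sqrt_eq_rpow]
  norm_num

lemma main_closed_form {κ : ℝ} (hκ : 0 < κ) (x y : ℝ) :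
    ∫ t : ℝ, qGauss κ x t * ((κ / Real.sqrt (2 * Real.pi)) * qGaussPrim κ y t) =
      1 / π * Hfun (κ / 2 * (x - y)) := by
  set c := Real.sqrt κ / (2 * π) ^ ((1 : ℝ) / 4) with hc
  have hc2 : c ^ 2 = κ / Real.sqrt (2 * π) := by
    rw [hc, div_pow, Real.sq_sqrt hκ.le, quarter_pow_sq]
  have hs : Real.sqrt (2 * π) * Real.sqrt (2 * π) = 2 * π :=
    Real.mul_self_sqrt (by positivity)
  have hsne : Real.sqrt (2 * π) ≠ 0 := by positivity
  have hπ : (π : ℝ) ≠ 0 := Real.pi_ne_zero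
  have hκne : κ ≠ 0 := hκ.ne'
  have hG : ∀ t : ℝ, qGauss κ x t * ((κ / Real.sqrt (2 * π)) * qGaussPrim κ y t) =
      κ / (2 * π) * ((fun u : ℝ => Real.exp (-u ^ 2) *
        (2 * gphi (u + κ / 2 * (x - y)) - Real.sqrt π)) (κ / 2 * t + -(κ / 2) * x)) := by
    intro t
    rw [qGauss_eq, qGaussPrim_eq hκ]
    have harg : κ / 2 * t + -(κ / 2) * y = (κ / 2 * t + -(κ / 2) * x) + κ / 2 * (x - y) := by
      ring
    rw [harg]
    simp only [← hc]
    have hcc : c * c = κ / Real.sqrt (2 * π) := by rw [← sq]; exact hc2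
    set E := Real.exp (-(κ / 2 * t + -(κ / 2) * x) ^ 2) with hE
    set B := 2 * gphi (κ / 2 * t + -(κ / 2) * x + κ / 2 * (x - y)) - Real.sqrt π with hB
    calc c * E * (κ / Real.sqrt (2 * π) * (c / κ * B))
        = (c * c) * (E * B) * (κ / κ) / Real.sqrt (2 * π) := by ring
      _ = (c * c) * (E * B) / Real.sqrt (2 * π) := by rw [div_self hκne, mul_one]
      _ = (κ / Real.sqrt (2 * π)) * (E * B) / Real.sqrt (2 * π) := by rw [hcc]
      _ = κ * (E * B) / (Real.sqrt (2 * π) * Real.sqrt (2 * π)) := by ring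
      _ = κ / (2 * π) * (E * B) := by rw [hs]; ring
  rw [integral_congr_ae (ae_of_all _ hG)]
  rw [integral_const_mul,
    integral_comp_affine (fun u : ℝ => Real.exp (-u ^ 2) *
      (2 * gphi (u + κ / 2 * (x - y)) - Real.sqrt π))
      (by linarith : (0:ℝ) < κ / 2) (-(κ / 2) * x)]
  have hbeta : (∫ s : ℝ, (fun u : ℝ => Real.exp (-u ^ 2) *
      (2 * gphi (u + κ / 2 * (x - y)) - Real.sqrt π)) s) = Hfun (κ / 2 * (x - y)) := rfl
  rw [hbeta]
  field_simp

/-- `⟨q_κ^x, (κ/√(2π)) ∂₀⁻¹ q_κ^y⟩ → sgn(x−y)` as `κ → ∞`, for `x ≠ y`. -/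
theorem stmt_2 (x y : ℝ) (hxy : x ≠ y) :
    Tendsto (fun κ : ℝ =>
        ∫ t : ℝ, qGauss κ x t * ((κ / Real.sqrt (2 * Real.pi)) * qGaussPrim κ y t))
      atTop (nhds (Real.sign (x - y))) := by
  have hform : (fun κ : ℝ =>
        ∫ t : ℝ, qGauss κ x t * ((κ / Real.sqrt (2 * Real.pi)) * qGaussPrim κ y t)) =ᶠ[atTop]
      fun κ : ℝ => 1 / π * Hfun (κ / 2 * (x - y)) := by
    filter_upwards [eventually_gt_atTop (0 : ℝ)] with κ hκ
    exact main_closed_form hκ x y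
  rcases lt_or_gt_of_ne hxy with hlt | hgt
  · -- x < y : sign = -1
    have hsign : Real.sign (x - y) = -1 := Real.sign_of_neg (by linarith)
    rw [hsign]
    have ha : Tendsto (fun κ : ℝ => κ / 2 * (x - y)) atTop atBot := by
      have h1 : Tendsto (fun κ : ℝ => κ / 2) atTop atTop :=
        tendsto_id.atTop_div_const two_pos
      exact h1.atTop_mul_const_of_neg (by linarith)
    have := (Hfun_tendsto_atBot.comp ha).const_mul (1 / π)
    have hval : 1 / π * (-π) = -1 := by field_simp
    rw [hval] at this
    exact Tendsto.congr' hform.symm this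
  · -- x > y : sign = 1
    have hsign : Real.sign (x - y) = 1 := Real.sign_of_pos (by linarith)
    rw [hsign]
    have ha : Tendsto (fun κ : ℝ => κ / 2 * (x - y)) atTop atTop := by
      have h1 : Tendsto (fun κ : ℝ => κ / 2) atTop atTop :=
        tendsto_id.atTop_div_const two_pos
      exact h1.atTop_mul_const (by linarith)
    have := (Hfun_tendsto_atTop.comp ha).const_mul (1 / π)
    have hval : 1 / π * π = 1 := by field_simp
    rw [hval] at this
    exact Tendsto.congr' hform.symm this
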